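/- arXiv:2001.01184 — 4 statements merged into one kernel-verified Lean document; each statement's English description precedes it below -/
import Mathlib

section
/- Let D be a finite directed graph whose underlying bipartite structure is a complete bipartite graph K_{3,3} with parts {v1,v2,v3} and {v4,v5,v6}: for every i ∈ {1,2,3} and j ∈ {4,5,6}, exactly one of the arcs (vi,vj) or (vj,vi) is in D, and there are no other arcs. Then D contains (as a subgraph on distinct vertices) either the pattern F1 consisting of arcs {(y,x),(z,x),(w,z)} or the pattern F2 consisting of arcs {(y,x),(z,x),(z,w),(u,w)}, where x,y,z,w,u are distinct vertices. -/
set_option maxRecDepth 100000 in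
set_option synthInstance.maxHeartbeats 400000 in
set_option synthInstance.maxSize 2000 in
set_option maxHeartbeats 1000000 in
theorem aux4 : ∀ f : Fin 3 → Fin 3 → Bool,
    (∃ p w y z : Fin 3, y ≠ z ∧ p ≠ w ∧ f y p ∧ f z p ∧ !f z w) ∨
    (∃ x w y z : Fin 3, y ≠ z ∧ x ≠ w ∧ !f x y ∧ !f x z ∧ f w z) ∨
    (∃ p q y z u : Fin 3, y ≠ z ∧ y ≠ u ∧ z ≠ u ∧ p ≠ q ∧
      f y p ∧ f z p ∧ f z q ∧ f u q) ∨
    (∃ x w y z u : Fin 3, y ≠ z ∧ y ≠ u ∧ z ≠ u ∧ x ≠ w ∧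
      !f x y ∧ !f x z ∧ !f w z ∧ !f w u) := by
  decide

theorem stmt_4 (r : Fin 6 → Fin 6 → Prop)
    (horient : ∀ i j : Fin 6, i < 3 → 3 ≤ j → (r i j ↔ ¬ r j i))
    (hno : ∀ i j : Fin 6, r i j → ((i < 3 ∧ 3 ≤ j) ∨ (j < 3 ∧ 3 ≤ i))) :
    (∃ x y z w : Fin 6, x ≠ y ∧ x ≠ z ∧ x ≠ w ∧ y ≠ z ∧ y ≠ w ∧ z ≠ w ∧
      r y x ∧ r z x ∧ r w z) ∨
    (∃ x y z w u : Fin 6, x ≠ y ∧ x ≠ z ∧ x ≠ w ∧ x ≠ u ∧ y ≠ z ∧ y ≠ w ∧ y ≠ u ∧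
      z ≠ w ∧ z ≠ u ∧ w ≠ u ∧ r y x ∧ r z x ∧ r z w ∧ r u w) := by
  classical
  -- embeddings of the two parts into Fin 6
  let A : Fin 3 → Fin 6 := fun a => ⟨a.val, by omega⟩
  let B : Fin 3 → Fin 6 := fun b => ⟨b.val + 3, by omega⟩
  -- f a b = true iff the edge between A a and B b is oriented A a → B b
  let f : Fin 3 → Fin 3 → Bool := fun a b => decide (r (A a) (B b))
  have hA : ∀ a : Fin 3, (A a).val < 3 := fun a => a.isLt
  have hB3 : ∀ b : Fin 3, 3 ≤ (B b).val := fun b => by simp [B]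
  have hAB : ∀ a b : Fin 3, A a ≠ B b := by
    intro a b h
    have : (A a).val = (B b).val := congrArg Fin.val h
    have := hA a; have := hB3 b; omega
  have hBA : ∀ a b : Fin 3, B b ≠ A a := fun a b h => hAB a b h.symm
  have hAinj : ∀ a a' : Fin 3, a ≠ a' → A a ≠ A a' := by
    intro a a' h he
    have : (A a).val = (A a').val := congrArg Fin.val he
    exact h (Fin.ext (by simpa [A] using this))
  have hBinj : ∀ b b' : Fin 3, b ≠ b' → B b ≠ B b' := by
    intro b b' h he
    have : (B b).val = (B b').val := congrArg Fin.val he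
    exact h (Fin.ext (by simpa [B] using this))
  -- f a b = true → r (A a) (B b)
  have hfT : ∀ a b : Fin 3, f a b = true → r (A a) (B b) := by
    intro a b h; exact of_decide_eq_true h
  -- f a b = false → r (B b) (A a)
  have hfF : ∀ a b : Fin 3, f a b = false → r (B b) (A a) := by
    intro a b h
    have hnr : ¬ r (A a) (B b) := of_decide_eq_false h
    have := horient (A a) (B b) (hA a) (hB3 b)
    by_contra hc
    exact hnr (this.mpr hc)
  have hnot : ∀ b : Bool, (!b) = true → b = false := by decide
  rcases aux4 f with ⟨p, w, y, z, hyz, hpw, h1, h2, h3⟩ |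
      ⟨x, w, y, z, hyz, hxw, h1, h2, h3⟩ |
      ⟨p, q, y, z, u, hyz, hyu, hzu, hpq, h1, h2, h3, h4⟩ |
      ⟨x, w, y, z, u, hyz, hyu, hzu, hxw, h1, h2, h3, h4⟩
  · -- F1 with x = B p, y = A y, z = A z, w = B w
    left
    exact ⟨B p, A y, A z, B w, hBA y p, hBA z p, hBinj p w hpw,
      hAinj y z hyz, hAB y w, hAB z w,
      hfT y p h1, hfT z p h2, hfF z w (hnot _ h3)⟩
  · -- F1 with x = A x, y = B y, z = B z, w = A w
    left
    exact ⟨A x, B y, B z, A w, hAB x y, hAB x z, hAinj x w hxw,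
      hBinj y z hyz, hBA w y, hBA w z,
      hfF x y (hnot _ h1), hfF x z (hnot _ h2),
      hfT w z h3⟩
  · -- F2 with x = B p, w = B q, y z u in A
    right
    exact ⟨B p, A y, A z, B q, A u, hBA y p, hBA z p, hBinj p q hpq, hBA u p,
      hAinj y z hyz, hAB y q, hAinj y u hyu, hAB z q, hAinj z u hzu,
      (hAB u q).symm,
      hfT y p h1, hfT z p h2, hfT z q h3, hfT u q h4⟩
  · -- F2 with x = A x, w = A w, y z u in B
    right
    exact ⟨A x, B y, B z, A w, B u, hAB x y, hAB x z, hAinj x w hxw, hAB x u,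
      hBinj y z hyz, hBA w y, hBinj y u hyu, hBA w z, hBinj z u hzu,
      hAB w u,
      hfF x y (hnot _ h1), hfF x z (hnot _ h2),
      hfF w z (hnot _ h3), hfF w u (hnot _ h4)⟩
end

section
/- Let H be a hypergraph on vertex set V obtained from a simple graph G on vertex set W as follows: replace each vertex w of G by three distinct copies in V, and replace each edge {x,y} of G by the 6-element hyperedge consisting of the three copies of x and the three copies of y. If G contains no cycle of length 3 and no cycle of length 4, then H contains no Berge cycle of length 4. -/
private lemma edge_eq {W : Type*} {G : SimpleGraph W} {s : Sym2 W} (hs : s ∈ G.edgeSet)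
    {x y : W} (hx : x ∈ s) (hy : y ∈ s) (hxy : x ≠ y) : s = s(x, y) ∧ G.Adj x y := by
  have h := (Sym2.mem_and_mem_iff hxy).1 ⟨hx, hy⟩
  exact ⟨h, G.mem_edgeSet.1 (h ▸ hs)⟩

private lemma aux8 {W : Type*} (G : SimpleGraph W)
    (h3 : ∀ a b c : W, G.Adj a b → G.Adj b c → G.Adj c a → False)
    (a c d : W) (e1 e2 e3 : Sym2 W)
    (h12 : e1 ≠ e2) (h13 : e1 ≠ e3) (h23 : e2 ≠ e3)
    (hE1 : e1 ∈ G.edgeSet) (hE2 : e2 ∈ G.edgeSet) (hE3 : e3 ∈ G.edgeSet)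
    (h1a : a ∈ e1) (h1c : c ∈ e1) (h2c : c ∈ e2) (h2d : d ∈ e2)
    (h3d : d ∈ e3) (h3a : a ∈ e3)
    (hne : ¬(a = c ∧ a = d)) : False := by
  by_cases hac : a = c
  · have had : a ≠ d := fun h => hne ⟨hac, h⟩
    obtain ⟨he2, -⟩ := edge_eq hE2 h2c h2d (hac ▸ had)
    obtain ⟨he3, -⟩ := edge_eq hE3 h3d h3a (Ne.symm had)
    exact h23 (by rw [he2, he3, ← hac, Sym2.eq_swap])
  · obtain ⟨he1, hA1⟩ := edge_eq hE1 h1a h1c hac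
    by_cases hcd : c = d
    · obtain ⟨he3, -⟩ := edge_eq hE3 h3d h3a (fun h => hac (hcd ▸ h.symm))
      exact h13 (by rw [he1, he3, ← hcd, Sym2.eq_swap])
    · obtain ⟨he2, hA2⟩ := edge_eq hE2 h2c h2d hcd
      by_cases hda : d = a
      · exact h12 (by rw [he1, he2, hda, Sym2.eq_swap])
      · obtain ⟨-, hA3⟩ := edge_eq hE3 h3d h3a hda
        exact h3 a c d hA1 hA2 hA3

theorem stmt_8 {W : Type*} [Fintype W] [DecidableEq W] (G : SimpleGraph W)
    (h3 : ∀ a b c : W, G.Adj a b → G.Adj b c → G.Adj c a → False)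
    (h4 : ∀ a b c d : W, a ≠ c → b ≠ d →
      G.Adj a b → G.Adj b c → G.Adj c d → G.Adj d a → False) :
    ¬ ∃ (v : Fin 4 → W × Fin 3) (e : Fin 4 → Sym2 W),
      Function.Injective v ∧ Function.Injective e ∧
      (∀ i : Fin 4, e i ∈ G.edgeSet) ∧
      (∀ i : Fin 4, (v i).1 ∈ e i ∧ (v (i + 1)).1 ∈ e i) := by
  rintro ⟨v, e, hv, he, heE, hmem⟩
  set a := (v 0).1 with ha
  set b := (v 1).1 with hb
  set c := (v 2).1 with hc
  set d := (v 3).1 with hd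
  have h0a : a ∈ e 0 := (hmem 0).1
  have h0b : b ∈ e 0 := (hmem 0).2
  have h1b : b ∈ e 1 := (hmem 1).1
  have h1c : c ∈ e 1 := (hmem 1).2
  have h2c : c ∈ e 2 := (hmem 2).1
  have h2d : d ∈ e 2 := (hmem 2).2
  have h3d : d ∈ e 3 := (hmem 3).1
  have h3a : a ∈ e 3 := by have := (hmem 3).2; simpa using this
  have hne : ∀ i j : Fin 4, i ≠ j → e i ≠ e j := fun i j hij h => hij (he h)
  by_cases hall : a = b ∧ a = c ∧ a = d
  · obtain ⟨hab, hac, had⟩ := hall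
    have hf : Function.Injective (fun i : Fin 4 => (v i).2) := by
      intro i j hij
      apply hv
      have key : ∀ k : Fin 4, (v k).1 = a := by
        intro k
        fin_cases k
        exacts [rfl, hab.symm, hac.symm, had.symm]
      exact Prod.ext ((key i).trans (key j).symm) hij
    have := Fintype.card_le_of_injective _ hf
    simp at this
  · by_cases hab : a = b
    · exact aux8 G h3 a c d (e 1) (e 2) (e 3)
        (hne 1 2 (by decide)) (hne 1 3 (by decide)) (hne 2 3 (by decide))
        (heE 1) (heE 2) (heE 3) (hab ▸ h1b) h1c h2c h2d h3d h3a
        (fun h => hall ⟨hab, h.1, h.2⟩)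
    · by_cases hbc : b = c
      · exact aux8 G h3 b d a (e 2) (e 3) (e 0)
          (hne 2 3 (by decide)) (hne 2 0 (by decide)) (hne 3 0 (by decide))
          (heE 2) (heE 3) (heE 0) (hbc ▸ h2c) h2d h3d h3a h0a h0b
          (fun h => hall ⟨h.2.symm, h.2.symm.trans hbc, h.2.symm.trans h.1⟩)
      · by_cases hcd : c = d
        · exact aux8 G h3 c a b (e 3) (e 0) (e 1)
            (hne 3 0 (by decide)) (hne 3 1 (by decide)) (hne 0 1 (by decide))
            (heE 3) (heE 0) (heE 1) (hcd ▸ h3d) h3a h0a h0b h1b h1c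
            (fun h => hab (h.1.symm.trans h.2))
        · by_cases hda : d = a
          · exact aux8 G h3 d b c (e 0) (e 1) (e 2)
              (hne 0 1 (by decide)) (hne 0 2 (by decide)) (hne 1 2 (by decide))
              (heE 0) (heE 1) (heE 2) (hda ▸ h0a) h0b h1b h1c h2c h2d
              (fun h => hbc (h.1.symm.trans h.2))
          · obtain ⟨he0, hA0⟩ := edge_eq (heE 0) h0a h0b hab
            obtain ⟨he1, hA1⟩ := edge_eq (heE 1) h1b h1c hbc
            obtain ⟨he2, hA2⟩ := edge_eq (heE 2) h2c h2d hcd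
            obtain ⟨he3, hA3⟩ := edge_eq (heE 3) h3d h3a hda
            have hac : a ≠ c := fun h => hne 0 1 (by decide)
              (by rw [he0, he1, h, Sym2.eq_swap])
            have hbd : b ≠ d := fun h => hne 1 2 (by decide)
              (by rw [he1, he2, h, Sym2.eq_swap])
            exact h4 a b c d hac hbd hA0 hA1 hA2 hA3
end

section
/- Let D be a directed graph on six distinct vertices v1,...,v6 such that for every i ∈ {1,2,3} and j ∈ {4,5,6} exactly one of (vi,vj), (vj,vi) is an arc of D, and these are the only arcs. Suppose v1 has at least two in-neighbors among {v4,v5,v6}, say v4 and v5, and suppose D contains no copy of F1 (arcs y→x, z→x, w→z on distinct vertices). Then (v4,vi) and (v5,vi) are arcs of D for every i ∈ {1,2,3}. -/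
theorem stmt_11 (r : Fin 6 → Fin 6 → Prop)
    (horient : ∀ i j : Fin 6, i < 3 → 3 ≤ j → (r i j ↔ ¬ r j i))
    (honly : ∀ i j : Fin 6, r i j → ((i < 3 ∧ 3 ≤ j) ∨ (j < 3 ∧ 3 ≤ i)))
    (h40 : r 3 0) (h50 : r 4 0)
    (hF1 : ¬ ∃ x y z w : Fin 6, x ≠ y ∧ x ≠ z ∧ x ≠ w ∧ y ≠ z ∧ y ≠ w ∧ z ≠ w ∧
      r y x ∧ r z x ∧ r w z) :
    ∀ i : Fin 6, i < 3 → r 3 i ∧ r 4 i := by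
  intro i hi
  constructor
  · by_contra h
    have hi3 : r i 3 := (horient i 3 hi (by decide)).2 h
    rcases eq_or_ne i 0 with rfl | h0
    · exact ((horient 0 3 (by decide) (by decide)).1 hi3) h40
    · exact hF1 ⟨0, 4, 3, i, by decide, by decide, Ne.symm h0, by decide,
        fun he => by simp [← he] at hi, fun he => by simp [← he] at hi, h50, h40, hi3⟩
  · by_contra h
    have hi4 : r i 4 := (horient i 4 hi (by decide)).2 h
    rcases eq_or_ne i 0 with rfl | h0
    · exact ((horient 0 4 (by decide) (by decide)).1 hi4) h50
    · exact hF1 ⟨0, 3, 4, i, by decide, by decide, Ne.symm h0, by decide,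
        fun he => by simp [← he] at hi, fun he => by simp [← he] at hi, h40, h50, hi4⟩
end

section
/- Let G be a simple graph on n vertices with no K_{2,7} subgraph, minimum degree greater than d/3 where d ≥ 6 is the average degree, and maximum degree at least 18√n. Then d < √n + 3. -/
/-! Double count the paths `u - w - x` of length two out of a vertex `u` of degree at least
`18√n`. Every `w ∈ N(u)` has degree more than `d/3`, so there are at least `deg u · (d/3 - 1)`
such paths with `x ≠ u`; since `G` is `K_{2,7}`-free, each endpoint `x ≠ u` is reached by at
most six of them. Assuming `d ≥ √n + 3`, this gives `6n ≤ 18√n (d/3 - 1) ≤ 6(n - 1)`. -/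

open Finset

namespace SimpleGraph

variable {V : Type*} [Fintype V] [DecidableEq V] (G : SimpleGraph V) [DecidableRel G.Adj]

theorem sum_degree_eq_sum_card_neighborFinset_inter (W : Finset V) :
    ∑ w ∈ W, G.degree w = ∑ x, #(G.neighborFinset x ∩ W) := by
  simp_rw [degree, card_eq_sum_ones]
  exact sum_comm' (by simp [and_comm, adj_comm])

variable {G}

theorem card_neighborFinset_inter_lt {t : ℕ}
    (h : ¬ ∃ (a b : V) (S : Finset V), a ≠ b ∧ S.card = t ∧ a ∉ S ∧ b ∉ S ∧
      ∀ s ∈ S, G.Adj a s ∧ G.Adj b s)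
    {a b : V} (hab : a ≠ b) : #(G.neighborFinset a ∩ G.neighborFinset b) < t := by
  by_contra! hle
  obtain ⟨S, hS, hcard⟩ := exists_subset_card_eq hle
  have hadj : ∀ s ∈ S, G.Adj a s ∧ G.Adj b s := fun s hs => by
    simpa only [mem_inter, mem_neighborFinset] using hS hs
  exact h ⟨a, b, S, hab, hcard, fun ha => G.irrefl (hadj a ha).1,
    fun hb => G.irrefl (hadj b hb).2, hadj⟩

theorem sum_degree_neighborFinset_le {u : V} {m : ℕ}
    (h : ∀ x ≠ u, #(G.neighborFinset x ∩ G.neighborFinset u) ≤ m) :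
    ∑ w ∈ G.neighborFinset u, G.degree w ≤ G.degree u + m * (Fintype.card V - 1) := by
  rw [sum_degree_eq_sum_card_neighborFinset_inter, ← add_sum_erase _ _ (mem_univ u), inter_self,
    card_neighborFinset_eq_degree]
  gcongr
  calc ∑ x ∈ univ.erase u, #(G.neighborFinset x ∩ G.neighborFinset u)
      ≤ ∑ _x ∈ univ.erase u, m := sum_le_sum fun x hx => h x (ne_of_mem_erase hx)
    _ = m * (Fintype.card V - 1) := by
      rw [sum_const, card_erase_of_mem (mem_univ u), card_univ, smul_eq_mul, mul_comm]

end SimpleGraph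

open SimpleGraph in
theorem stmt_16_general {V : Type*} [Fintype V] [DecidableEq V] (n : ℕ) (hn : Fintype.card V = n)
    (G : SimpleGraph V) [DecidableRel G.Adj]
    (hK27 : ¬ ∃ (a b : V) (S : Finset V), a ≠ b ∧ S.card = 7 ∧ a ∉ S ∧ b ∉ S ∧
      ∀ s ∈ S, G.Adj a s ∧ G.Adj b s)
    (d : ℝ)
    (hmin : ∀ v : V, d / 3 < (G.degree v : ℝ))
    (hmax : ∃ u : V, 18 * Real.sqrt n ≤ (G.degree u : ℝ)) :
    d < Real.sqrt n + 3 := by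
  obtain ⟨u, hu⟩ := hmax
  by_contra! hd
  have hn1 : 1 ≤ n := hn ▸ Fintype.card_pos_iff.mpr ⟨u⟩
  have hsq : Real.sqrt n * Real.sqrt n = n := Real.mul_self_sqrt n.cast_nonneg
  have hlower : (G.degree u : ℝ) * (d / 3) ≤ ∑ w ∈ G.neighborFinset u, (G.degree w : ℝ) := by
    simpa [card_neighborFinset_eq_degree] using
      card_nsmul_le_sum (G.neighborFinset u) _ _ fun w _ => (hmin w).le
  have hupper : ∑ w ∈ G.neighborFinset u, (G.degree w : ℝ) ≤ G.degree u + 6 * (n - 1) := by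
    have := sum_degree_neighborFinset_le (u := u) (m := 6) fun x hx =>
      Nat.le_of_lt_succ (card_neighborFinset_inter_lt hK27 hx)
    rw [hn] at this
    exact_mod_cast this
  nlinarith [Real.sqrt_nonneg n]

theorem stmt_16 {V : Type*} [Fintype V] [DecidableEq V] (n : ℕ) (hn : Fintype.card V = n)
    (G : SimpleGraph V) [DecidableRel G.Adj]
    (hK27 : ¬ ∃ (a b : V) (S : Finset V), a ≠ b ∧ S.card = 7 ∧ a ∉ S ∧ b ∉ S ∧
      ∀ s ∈ S, G.Adj a s ∧ G.Adj b s)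
    (d : ℝ) (hd : d = (∑ v : V, (G.degree v : ℝ)) / n) (hd6 : 6 ≤ d)
    (hmin : ∀ v : V, d / 3 < (G.degree v : ℝ))
    (hmax : ∃ u : V, 18 * Real.sqrt n ≤ (G.degree u : ℝ)) :
    d < Real.sqrt n + 3 :=
  stmt_16_general n hn G hK27 d hmin hmax
end
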